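/- Let V = ⊕_{i∈ℤ}(ℂ[∂]x_i ⊕ ℂ[∂]y_i) with the actions L_i _λ x_j = (∂+aλ+b)x_{i+j}, L_i _λ y_j = (∂+(a+1/2)λ+b)y_{i+j}, G_i _λ x_j = y_{i+j}, G_i _λ y_j = (∂+2aλ+b)x_{i+j} (a,b ∈ ℂ). Then V is a ℤ-graded conformal module over the loop super-Virasoro conformal superalgebra, with i-th graded piece ℂ[∂]x_i ⊕ ℂ[∂]y_i. -/

import Mathlib

open Polynomial

/-- Substitution `∂ ↦ ∂ + λ`. -/
noncomputable def sh (l : ℂ) (f : Polynomial ℂ) : Polynomial ℂ :=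
  f.comp (Polynomial.X + Polynomial.C l)

/-- The free `ℤ`-graded `ℂ[∂]`-module `V = ⊕_{j∈ℤ}(ℂ[∂]x_j ⊕ ℂ[∂]y_j)`: the first
component records the coefficients of the (even) `x_j`, the second those of the
(odd) `y_j`. -/
abbrev VG := (ℤ →₀ Polynomial ℂ) × (ℤ →₀ Polynomial ℂ)

/-- The `λ`-action of `L_i` on `M'_{a,b}`: `L_i ₗ x_j = (∂+aλ+b)x_{i+j}`,
`L_i ₗ y_j = (∂+(a+1/2)λ+b)y_{i+j}`. -/
noncomputable def Lg (a b : ℂ) (i : ℤ) (l : ℂ) (v : VG) : VG :=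
  (Finsupp.mapDomain (i + ·)
      (v.1.mapRange (fun f => sh l f * (Polynomial.X + Polynomial.C (a*l + b)))
        (by simp [sh])),
   Finsupp.mapDomain (i + ·)
      (v.2.mapRange (fun f => sh l f * (Polynomial.X + Polynomial.C ((a + 1/2)*l + b)))
        (by simp [sh])))

/-- The `λ`-action of `G_i` on `M'_{a,b}`: `G_i ₗ x_j = y_{i+j}`,
`G_i ₗ y_j = (∂+2aλ+b)x_{i+j}`. -/
noncomputable def Gg (a b : ℂ) (i : ℤ) (l : ℂ) (v : VG) : VG :=
  (Finsupp.mapDomain (i + ·)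
      (v.2.mapRange (fun f => sh l f * (Polynomial.X + Polynomial.C (2*a*l + b)))
        (by simp [sh])),
   Finsupp.mapDomain (i + ·) (v.1.mapRange (sh l) (by simp [sh])))

/-! Every λ-action shifts the grading and sends a coefficient `f(∂)` to `f(∂ + λ)` times a
linear factor. Evaluating at `∂ = x`, each identity in each graded component becomes an
identity between polynomials in `x, λ, μ, a, b` and the value of one coefficient at
`x + λ + μ`, which is checked by `ring`. -/

namespace Finsupp

variable {G M : Type*} [AddCommGroup G] [AddCommMonoid M]

theorem mapDomain_add_left_apply (i k : G) (w : G →₀ M) :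
    mapDomain (i + ·) w k = w (k - i) := by
  simpa using mapDomain_apply (add_right_injective i) w (k - i)

theorem support_mapDomain_add_left_mapRange_subset {N : Type*} [Zero N] {g : N → M}
    (hg : g 0 = 0) (i j : G) {w : G →₀ N} (hw : w.support ⊆ {j}) :
    (mapDomain (i + ·) (w.mapRange g hg)).support ⊆ {i + j} := by
  classical
  intro k hk
  obtain ⟨t, ht, rfl⟩ := Finset.mem_image.1 (mapDomain_support hk)
  rw [Finset.mem_singleton.1 (hw (support_mapRange ht))]
  exact Finset.mem_singleton_self _

end Finsupp

theorem eval_sh (l x : ℂ) (f : ℂ[X]) : (sh l f).eval x = f.eval (x + l) := by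
  simp [sh, eval_comp]

theorem VG.ext_eval {v w : VG} (h₁ : ∀ k x, (v.1 k).eval x = (w.1 k).eval x)
    (h₂ : ∀ k x, (v.2 k).eval x = (w.2 k).eval x) : v = w :=
  Prod.ext (Finsupp.ext fun k => Polynomial.funext (h₁ k))
    (Finsupp.ext fun k => Polynomial.funext (h₂ k))

section Components

variable (a b : ℂ) (i : ℤ) (l : ℂ) (v : VG) (k : ℤ) (x : ℂ)

theorem eval_Lg_fst :
    ((Lg a b i l v).1 k).eval x = (v.1 (k - i)).eval (x + l) * (x + (a*l + b)) := by
  simp [Lg, Finsupp.mapDomain_add_left_apply, eval_sh]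

theorem eval_Lg_snd :
    ((Lg a b i l v).2 k).eval x = (v.2 (k - i)).eval (x + l) * (x + ((a + 1/2)*l + b)) := by
  simp [Lg, Finsupp.mapDomain_add_left_apply, eval_sh]

theorem eval_Gg_fst :
    ((Gg a b i l v).1 k).eval x = (v.2 (k - i)).eval (x + l) * (x + (2*a*l + b)) := by
  simp [Gg, Finsupp.mapDomain_add_left_apply, eval_sh]

theorem eval_Gg_snd : ((Gg a b i l v).2 k).eval x = (v.1 (k - i)).eval (x + l) := by
  simp [Gg, Finsupp.mapDomain_add_left_apply, eval_sh]

end Components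

section Brackets

variable (a b : ℂ) (i j : ℤ) (l m : ℂ) (v : VG)

theorem Lg_bracket_Lg :
    (l - m) • Lg a b (i+j) (l+m) v = Lg a b i l (Lg a b j m v) - Lg a b j m (Lg a b i l v) := by
  refine VG.ext_eval (fun k x => ?_) (fun k x => ?_) <;>
  · simp only [Prod.smul_fst, Prod.smul_snd, Prod.fst_sub, Prod.snd_sub, Finsupp.smul_apply,
      Finsupp.sub_apply, eval_smul, eval_sub, smul_eq_mul, eval_Lg_fst, eval_Lg_snd, sub_sub,
      add_comm j i, add_assoc, add_comm m l]
    ring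

theorem Lg_bracket_Gg :
    ((1/2)*l - m) • Gg a b (i+j) (l+m) v
      = Lg a b i l (Gg a b j m v) - Gg a b j m (Lg a b i l v) := by
  refine VG.ext_eval (fun k x => ?_) (fun k x => ?_) <;>
  · simp only [Prod.smul_fst, Prod.smul_snd, Prod.fst_sub, Prod.snd_sub, Finsupp.smul_apply,
      Finsupp.sub_apply, eval_smul, eval_sub, smul_eq_mul, eval_Lg_fst, eval_Lg_snd, eval_Gg_fst,
      eval_Gg_snd, sub_sub, add_comm j i, add_assoc, add_comm m l]
    ring

theorem Gg_bracket_Gg :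
    (2 : ℂ) • Lg a b (i+j) (l+m) v = Gg a b i l (Gg a b j m v) + Gg a b j m (Gg a b i l v) := by
  refine VG.ext_eval (fun k x => ?_) (fun k x => ?_) <;>
  · simp only [Prod.smul_fst, Prod.smul_snd, Prod.fst_add, Prod.snd_add, Finsupp.smul_apply,
      Finsupp.add_apply, eval_smul, eval_add, smul_eq_mul, eval_Lg_fst, eval_Lg_snd, eval_Gg_fst,
      eval_Gg_snd, sub_sub, add_comm j i, add_assoc, add_comm m l]
    ring

end Brackets

/-- `M'_{a,b}` is a `ℤ`-graded conformal module over the loop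
super-Virasoro conformal superalgebra: the conformal Jacobi identities hold, and the
`λ`-actions of `L_i`, `G_i` send the `j`-th graded piece `ℂ[∂]x_j ⊕ ℂ[∂]y_j` into the
`(i+j)`-th graded piece. -/
theorem stmt17 (a b : ℂ) :
    (∀ (i j : ℤ) (l m : ℂ) (v : VG),
        (l - m) • Lg a b (i+j) (l+m) v = Lg a b i l (Lg a b j m v) - Lg a b j m (Lg a b i l v)
      ∧ ((1/2)*l - m) • Gg a b (i+j) (l+m) v
          = Lg a b i l (Gg a b j m v) - Gg a b j m (Lg a b i l v)
      ∧ (2 : ℂ) • Lg a b (i+j) (l+m) v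
          = Gg a b i l (Gg a b j m v) + Gg a b j m (Gg a b i l v))
    ∧ (∀ (i j : ℤ) (l : ℂ) (v : VG), v.1.support ⊆ {j} → v.2.support ⊆ {j} →
        (Lg a b i l v).1.support ⊆ {i + j} ∧ (Lg a b i l v).2.support ⊆ {i + j}
      ∧ (Gg a b i l v).1.support ⊆ {i + j} ∧ (Gg a b i l v).2.support ⊆ {i + j}) := by
  refine ⟨fun i j l m v => ⟨Lg_bracket_Lg a b i j l m v, Lg_bracket_Gg a b i j l m v,
    Gg_bracket_Gg a b i j l m v⟩, fun i j l v h₁ h₂ => ?_⟩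
  exact ⟨Finsupp.support_mapDomain_add_left_mapRange_subset _ i j h₁,
    Finsupp.support_mapDomain_add_left_mapRange_subset _ i j h₂,
    Finsupp.support_mapDomain_add_left_mapRange_subset _ i j h₂,
    Finsupp.support_mapDomain_add_left_mapRange_subset _ i j h₁⟩
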